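/- Let p be an odd prime and n ≥ 1. There exists a Hopf algebra structure over the field Z/p on the polynomial algebra A = (Z/p)[ξ_1, …, ξ_{n−1}] whose comultiplication Δ : A → A ⊗ A is the algebra homomorphism determined by Δ(ξ_k) = Σ_{i=0}^{k} ξ_{k−i}^{p^i} ⊗ ξ_i for 1 ≤ k ≤ n−1 (with the convention ξ_0 = 1), and whose counit is the algebra homomorphism sending every ξ_k to 0. -/

import Mathlib

/-!
Every axiom is an identity between algebra maps out of the polynomial algebra `A`, so it suffices
to check it on the generators `ξ_m`, where `Δ ξ_m = ∑_{a + i = m} ξ_a ^ p ^ i ⊗ ξ_i`.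
Coassociativity uses that `x ↦ x ^ p ^ i` is additive on `A ⊗ A` (characteristic `p`): both sides
of it become the same sum over `b + j + i = m` of `ξ_b ^ p ^ (j + i) ⊗ ξ_j ^ p ^ i ⊗ ξ_i`.
The relations `∑_{a + i = m} S(ξ_a) ^ p ^ i ξ_i = 0` and `∑_{a + i = m} ξ_a ^ p ^ i S'(ξ_i) = 0`
(for `m > 0`) define a left antipode `S` and a right antipode `S'` recursively; in the convolution
monoid of algebra endomorphisms of the resulting bialgebra they are a left and a right inverse
of the identity, hence equal.
-/

open TensorProduct

/-- The generators `ξ_0 = 1, ξ_1, …, ξ_{n-1}` of `(Z/p)[ξ_1, …, ξ_{n-1}]`. -/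
noncomputable def xiGen (p n : ℕ) : ℕ → MvPolynomial (Fin (n - 1)) (ZMod p)
  | 0 => 1
  | m + 1 => if h : m < n - 1 then MvPolynomial.X (⟨m, h⟩ : Fin (n - 1)) else 0

open Finset MvPolynomial WithConv

theorem Finset.sum_antidiagonal_antidiagonal_assoc {M N : Type*} [AddCommMonoid M]
    [AddCommMonoid N] [Finset.HasAntidiagonal N] (m : N) (f : N → N → N → M) :
    ∑ ai ∈ antidiagonal m, ∑ bj ∈ antidiagonal ai.1, f bj.1 bj.2 ai.2 =
      ∑ ai ∈ antidiagonal m, ∑ cj ∈ antidiagonal ai.2, f ai.1 cj.1 cj.2 := by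
  simp only [sum_sigma']
  apply sum_nbij' (fun ⟨⟨_, i⟩, ⟨b, j⟩⟩ ↦ ⟨(b, j + i), (j, i)⟩)
    (fun ⟨⟨a, _⟩, ⟨c, j⟩⟩ ↦ ⟨(a + c, j), (a, c)⟩) <;> aesop (add simp [add_assoc])

namespace MilnorDual

variable (p n : ℕ)

local notation "A" => MvPolynomial (Fin (n - 1)) (ZMod p)

@[simp]
theorem xiGen_zero : xiGen p n 0 = 1 := rfl

theorem xiGen_add_one (k : Fin (n - 1)) : xiGen p n (k + 1) = X k := by
  simp [xiGen, k.isLt]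

theorem algHom_ext_xiGen {B : Type*} [Semiring B] [Algebra (ZMod p) B] {f g : A →ₐ[ZMod p] B}
    (h : ∀ m, 0 < m → m ≤ n - 1 → f (xiGen p n m) = g (xiGen p n m)) : f = g :=
  algHom_ext fun k ↦ by simpa only [xiGen_add_one] using h (k + 1) k.succ_pos k.isLt

theorem aeval_xiGen {B : Type*} [CommSemiring B] [Algebra (ZMod p) B] {s : ℕ → B} (h0 : s 0 = 1)
    {m : ℕ} (hm : m ≤ n - 1) : aeval (fun k : Fin (n - 1) ↦ s (k + 1)) (xiGen p n m) = s m := by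
  cases m with
  | zero => simp [h0]
  | succ k => rw [xiGen_add_one p n ⟨k, hm⟩, aeval_X]

noncomputable def comulXi (m : ℕ) : A ⊗[ZMod p] A :=
  ∑ ai ∈ antidiagonal m, (xiGen p n ai.1 ^ p ^ ai.2) ⊗ₜ[ZMod p] xiGen p n ai.2

noncomputable def comulHom : A →ₐ[ZMod p] A ⊗[ZMod p] A :=
  aeval fun k ↦ comulXi p n (k + 1)

noncomputable def counitHom : A →ₐ[ZMod p] ZMod p :=
  aeval fun _ ↦ 0

theorem comulHom_xiGen {m : ℕ} (hm : m ≤ n - 1) : comulHom p n (xiGen p n m) = comulXi p n m :=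
  aeval_xiGen p n (by simp [comulXi, Algebra.TensorProduct.one_def]) hm

theorem comulHom_X (k : Fin (n - 1)) : comulHom p n (X k) =
    ∑ i ∈ range ((k : ℕ) + 2), (xiGen p n ((k : ℕ) + 1 - i) ^ p ^ i) ⊗ₜ[ZMod p] xiGen p n i := by
  rw [comulHom, aeval_X, comulXi, ← Nat.sum_antidiagonal_swap,
    Nat.sum_antidiagonal_eq_sum_range_succ_mk]
  rfl

theorem counitHom_xiGen {m : ℕ} (hm : m ≠ 0) : counitHom p n (xiGen p n m) = 0 := by
  obtain _ | k := m
  · contradiction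
  · simp only [xiGen]
    split <;> simp [counitHom]

theorem counitHom_rTensor_comulHom [NeZero p] :
    (Algebra.TensorProduct.map (counitHom p n) (.id (ZMod p) A)).comp (comulHom p n) =
      (Algebra.TensorProduct.lid (ZMod p) A).symm := by
  refine algHom_ext_xiGen p n fun m _ hm ↦ ?_
  simp only [AlgHom.comp_apply, comulHom_xiGen p n hm, comulXi, map_sum,
    Algebra.TensorProduct.map_tmul, AlgHom.id_apply, map_pow]
  rw [sum_eq_single_of_mem (0, m) (mem_antidiagonal.mpr (zero_add m))]
  · simp
  · rintro ⟨a, i⟩ hmem hai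
    have ha : a ≠ 0 := by rintro rfl; simp_all
    rw [counitHom_xiGen p n ha, zero_pow (pow_ne_zero _ (NeZero.ne p)), zero_tmul]

theorem counitHom_lTensor_comulHom :
    (Algebra.TensorProduct.map (.id (ZMod p) A) (counitHom p n)).comp (comulHom p n) =
      (Algebra.TensorProduct.rid (ZMod p) (ZMod p) A).symm := by
  refine algHom_ext_xiGen p n fun m _ hm ↦ ?_
  simp only [AlgHom.comp_apply, comulHom_xiGen p n hm, comulXi, map_sum,
    Algebra.TensorProduct.map_tmul, AlgHom.id_apply]
  rw [sum_eq_single_of_mem (m, 0) (mem_antidiagonal.mpr (add_zero m))]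
  · simp
  · rintro ⟨a, i⟩ hmem hai
    have hi : i ≠ 0 := by rintro rfl; simp_all
    rw [counitHom_xiGen p n hi, tmul_zero]

theorem lid_map_counitHom_comulHom [NeZero p] (a : A) :
    TensorProduct.lid (ZMod p) A (map (counitHom p n).toLinearMap .id (comulHom p n a)) = a := by
  rw [← LinearEquiv.eq_symm_apply]
  exact congr($(counitHom_rTensor_comulHom p n) a)

theorem rid_map_counitHom_comulHom (a : A) :
    TensorProduct.rid (ZMod p) A (map .id (counitHom p n).toLinearMap (comulHom p n a)) = a := by
  rw [← LinearEquiv.eq_symm_apply]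
  exact congr($(counitHom_lTensor_comulHom p n) a)

noncomputable def leftAntipodeXi : ℕ → A
  | 0 => 1
  | m + 1 => -∑ i ∈ range (m + 1), leftAntipodeXi (m - i) ^ p ^ (i + 1) * xiGen p n (i + 1)
decreasing_by omega

noncomputable def rightAntipodeXi : ℕ → A
  | 0 => 1
  | m + 1 => -∑ i : Fin (m + 1), xiGen p n (m - i + 1) ^ p ^ (i : ℕ) * rightAntipodeXi i

theorem sum_antidiagonal_leftAntipodeXi {m : ℕ} (hm : 0 < m) :
    ∑ ai ∈ antidiagonal m, leftAntipodeXi p n ai.1 ^ p ^ ai.2 * xiGen p n ai.2 = 0 := by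
  obtain ⟨k, rfl⟩ := Nat.exists_eq_add_one_of_ne_zero hm.ne'
  rw [Nat.sum_antidiagonal_succ', ← Nat.sum_antidiagonal_swap,
    Nat.sum_antidiagonal_eq_sum_range_succ_mk, leftAntipodeXi]
  simp

theorem sum_antidiagonal_rightAntipodeXi {m : ℕ} (hm : 0 < m) :
    ∑ ai ∈ antidiagonal m, xiGen p n ai.1 ^ p ^ ai.2 * rightAntipodeXi p n ai.2 = 0 := by
  obtain ⟨k, rfl⟩ := Nat.exists_eq_add_one_of_ne_zero hm.ne'
  rw [Nat.sum_antidiagonal_succ, ← Nat.sum_antidiagonal_swap,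
    Nat.sum_antidiagonal_eq_sum_range_succ_mk, rightAntipodeXi,
    Fin.sum_univ_eq_sum_range (fun i ↦ xiGen p n (k - i + 1) ^ p ^ i * rightAntipodeXi p n i)]
  simp

noncomputable def leftAntipode : A →ₐ[ZMod p] A :=
  aeval fun k ↦ leftAntipodeXi p n (k + 1)

noncomputable def rightAntipode : A →ₐ[ZMod p] A :=
  aeval fun k ↦ rightAntipodeXi p n (k + 1)

theorem leftAntipode_xiGen {m : ℕ} (hm : m ≤ n - 1) :
    leftAntipode p n (xiGen p n m) = leftAntipodeXi p n m :=
  aeval_xiGen p n (by rw [leftAntipodeXi]) hm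

theorem rightAntipode_xiGen {m : ℕ} (hm : m ≤ n - 1) :
    rightAntipode p n (xiGen p n m) = rightAntipodeXi p n m :=
  aeval_xiGen p n (by rw [rightAntipodeXi]) hm

variable [Fact p.Prime]

theorem comulHom_coassoc :
    (Algebra.TensorProduct.assoc (ZMod p) (ZMod p) (ZMod p) A A A).toAlgHom.comp
      ((Algebra.TensorProduct.map (comulHom p n) (.id (ZMod p) A)).comp (comulHom p n)) =
      (Algebra.TensorProduct.map (.id (ZMod p) A) (comulHom p n)).comp (comulHom p n) := by
  have : CharP (A ⊗[ZMod p] A) p := charP_of_injective_algebraMap' (ZMod p) p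
  refine algHom_ext_xiGen p n fun m _ hm ↦ ?_
  have hle {a : ℕ} (ha : a ≤ m) := comulHom_xiGen p n (ha.trans hm)
  simp only [AlgHom.comp_apply, AlgEquiv.toAlgHom_apply, hle le_rfl, comulXi,
    map_sum, Algebra.TensorProduct.map_tmul, AlgHom.id_apply, map_pow]
  calc _ = ∑ ai ∈ antidiagonal m, ∑ bj ∈ antidiagonal ai.1,
        (xiGen p n bj.1 ^ p ^ (bj.2 + ai.2)) ⊗ₜ[ZMod p]
          ((xiGen p n bj.2 ^ p ^ ai.2) ⊗ₜ[ZMod p] xiGen p n ai.2) := by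
        refine sum_congr rfl fun ai hai ↦ ?_
        rw [hle (HasAntidiagonal.antidiagonal.fst_le hai), comulXi, sum_pow_char_pow, sum_tmul,
          map_sum]
        refine sum_congr rfl fun bj _ ↦ ?_
        rw [Algebra.TensorProduct.tmul_pow, ← pow_mul, ← pow_add,
          Algebra.TensorProduct.assoc_tmul]
    _ = ∑ ai ∈ antidiagonal m, ∑ cj ∈ antidiagonal ai.2,
        (xiGen p n ai.1 ^ p ^ (cj.1 + cj.2)) ⊗ₜ[ZMod p]
          ((xiGen p n cj.1 ^ p ^ cj.2) ⊗ₜ[ZMod p] xiGen p n cj.2) :=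
        sum_antidiagonal_antidiagonal_assoc m fun a b c ↦
          (xiGen p n a ^ p ^ (b + c)) ⊗ₜ[ZMod p] ((xiGen p n b ^ p ^ c) ⊗ₜ[ZMod p] xiGen p n c)
    _ = _ := by
        refine sum_congr rfl fun ai hai ↦ ?_
        rw [hle (HasAntidiagonal.antidiagonal.snd_le hai), comulXi, tmul_sum]
        refine sum_congr rfl fun cj hcj ↦ ?_
        rw [mem_antidiagonal.mp hcj]

noncomputable abbrev bialgebra : Bialgebra (ZMod p) A :=
  .ofAlgHom (comulHom p n) (counitHom p n) (comulHom_coassoc p n) (counitHom_rTensor_comulHom p n)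
    (counitHom_lTensor_comulHom p n)

attribute [local instance] bialgebra

theorem convMul_apply_xiGen (f g : A →ₐ[ZMod p] A) {m : ℕ} (hm : m ≤ n - 1) :
    (toConv f * toConv g) (xiGen p n m) =
      ∑ ai ∈ antidiagonal m, f (xiGen p n ai.1) ^ p ^ ai.2 * g (xiGen p n ai.2) := by
  change Algebra.TensorProduct.lmul' (ZMod p) (Algebra.TensorProduct.map f g
    (comulHom p n (xiGen p n m))) = _
  simp [comulHom_xiGen p n hm, comulXi]

theorem convOne_apply_xiGen {m : ℕ} (hm : m ≠ 0) :
    (1 : WithConv (A →ₐ[ZMod p] A)) (xiGen p n m) = 0 := by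
  change algebraMap (ZMod p) A (counitHom p n (xiGen p n m)) = 0
  rw [counitHom_xiGen p n hm, map_zero]

theorem leftAntipode_mul_id :
    toConv (leftAntipode p n) * toConv (AlgHom.id (ZMod p) A) = 1 := by
  refine WithConv.ext (algHom_ext_xiGen p n fun m hm0 hm ↦ ?_)
  rw [convMul_apply_xiGen p n _ _ hm, convOne_apply_xiGen p n hm0.ne',
    ← sum_antidiagonal_leftAntipodeXi p n hm0]
  refine sum_congr rfl fun ai hai ↦ ?_
  rw [leftAntipode_xiGen p n ((HasAntidiagonal.antidiagonal.fst_le hai).trans hm), AlgHom.id_apply]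

theorem id_mul_rightAntipode :
    toConv (AlgHom.id (ZMod p) A) * toConv (rightAntipode p n) = 1 := by
  refine WithConv.ext (algHom_ext_xiGen p n fun m hm0 hm ↦ ?_)
  rw [convMul_apply_xiGen p n _ _ hm, convOne_apply_xiGen p n hm0.ne',
    ← sum_antidiagonal_rightAntipodeXi p n hm0]
  refine sum_congr rfl fun ai hai ↦ ?_
  rw [rightAntipode_xiGen p n ((HasAntidiagonal.antidiagonal.snd_le hai).trans hm), AlgHom.id_apply]

theorem id_mul_leftAntipode :
    toConv (AlgHom.id (ZMod p) A) * toConv (leftAntipode p n) = 1 := by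
  rw [left_inv_eq_right_inv (leftAntipode_mul_id p n) (id_mul_rightAntipode p n),
    id_mul_rightAntipode]

end MilnorDual

open MilnorDual in
theorem stmt_3 (p n : ℕ) (hp : p.Prime) :
    ∃ (comul : MvPolynomial (Fin (n - 1)) (ZMod p) →ₐ[ZMod p]
        (MvPolynomial (Fin (n - 1)) (ZMod p) ⊗[ZMod p] MvPolynomial (Fin (n - 1)) (ZMod p)))
      (counit : MvPolynomial (Fin (n - 1)) (ZMod p) →ₐ[ZMod p] ZMod p)
      (antipode : MvPolynomial (Fin (n - 1)) (ZMod p) →ₗ[ZMod p]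
        MvPolynomial (Fin (n - 1)) (ZMod p)),
      -- the comultiplication takes the prescribed values on the generators
      (∀ k : Fin (n - 1),
        comul (MvPolynomial.X k) =
          ∑ i ∈ Finset.range ((k : ℕ) + 2),
            ((xiGen p n ((k : ℕ) + 1 - i)) ^ (p ^ i)) ⊗ₜ[ZMod p] (xiGen p n i)) ∧
      -- the counit sends every generator to 0
      (∀ k : Fin (n - 1), counit (MvPolynomial.X k) = 0) ∧
      -- coassociativity
      ((Algebra.TensorProduct.assoc (ZMod p) (ZMod p) (ZMod p) (MvPolynomial (Fin (n - 1)) (ZMod p))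
          (MvPolynomial (Fin (n - 1)) (ZMod p))
          (MvPolynomial (Fin (n - 1)) (ZMod p))).toAlgHom.comp
        ((Algebra.TensorProduct.map comul (AlgHom.id (ZMod p) _)).comp comul) =
        (Algebra.TensorProduct.map (AlgHom.id (ZMod p) _) comul).comp comul) ∧
      -- counit laws
      (∀ a, (TensorProduct.lid (ZMod p) (MvPolynomial (Fin (n - 1)) (ZMod p)))
          ((TensorProduct.map counit.toLinearMap LinearMap.id) (comul a)) = a) ∧
      (∀ a, (TensorProduct.rid (ZMod p) (MvPolynomial (Fin (n - 1)) (ZMod p)))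
          ((TensorProduct.map LinearMap.id counit.toLinearMap) (comul a)) = a) ∧
      -- antipode laws
      (∀ a, (LinearMap.mul' (ZMod p) (MvPolynomial (Fin (n - 1)) (ZMod p)))
          ((TensorProduct.map antipode LinearMap.id) (comul a)) =
          algebraMap (ZMod p) (MvPolynomial (Fin (n - 1)) (ZMod p)) (counit a)) ∧
      (∀ a, (LinearMap.mul' (ZMod p) (MvPolynomial (Fin (n - 1)) (ZMod p)))
          ((TensorProduct.map LinearMap.id antipode) (comul a)) =
          algebraMap (ZMod p) (MvPolynomial (Fin (n - 1)) (ZMod p)) (counit a)) := by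
  have := Fact.mk hp
  refine ⟨comulHom p n, counitHom p n, (leftAntipode p n).toLinearMap, comulHom_X p n,
    fun k ↦ aeval_X _ k, comulHom_coassoc p n, lid_map_counitHom_comulHom p n,
    rid_map_counitHom_comulHom p n,
    fun a ↦ congr($(leftAntipode_mul_id p n) a), fun a ↦ congr($(id_mul_leftAntipode p n) a)⟩
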